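/- Let N₀, P₀ ∈ ℕ, N_{ℓ₁} = N₀·2^{ℓ₁}, P_{ℓ₂} = P₀·2^{ℓ₂}. Fix L₀ ∈ ℕ₀ and for ε ∈ (0,1) set L(ε) = max(⌈log₂(ε⁻¹) + log₂ log₂(ε⁻¹)⌉ − L₀, 1) and M_ℓ(ε) = ⌈ε⁻² N_{ℓ₁}^{-4/3} P_{ℓ₂}^{-4/3}⌉. Then the total work Σ_{ℓ ∈ ℕ₀², ℓ₁+ℓ₂ ≤ L(ε)} M_ℓ(ε) · N_{ℓ₁} P_{ℓ₂} is of order ε⁻²: there exist constants 0 < c ≤ C and ε₀ ∈ (0,1) such that c ε⁻² ≤ Σ_{ℓ₁+ℓ₂ ≤ L(ε)} M_ℓ(ε) N_{ℓ₁} P_{ℓ₂} ≤ C ε⁻² for all ε ∈ (0, ε₀]. -/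

import Mathlib

/-!
Write `t = ε⁻¹` and `w_ℓ = N_{ℓ₁} P_{ℓ₂}`. Since `w^{-4/3} · w = w^{-1/3}`, rounding up gives
`t² w_ℓ^{-1/3} ≤ M_ℓ w_ℓ ≤ t² w_ℓ^{-1/3} + w_ℓ`. The index `ℓ = 0` alone yields the lower bound.
For the upper bound, `Σ w_ℓ^{-1/3}` is dominated by the product of two geometric series of ratio
`2^{-1/3}`, and the rounding overhead `Σ w_ℓ ≤ (L+1)² 2^L N₀ P₀` is `O(t (log t)³) = O(t²)`, because
the choice of `L(ε)` gives `2^L ≤ 2 t log₂ t`.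
-/

/-- Resolution in the timestep direction: `N_{ℓ₁} = N₀ · 2^{ℓ₁}`. -/
noncomputable def resN (N₀ : ℕ) (ℓ₁ : ℕ) : ℝ := (N₀ : ℝ) * 2 ^ ℓ₁

/-- Resolution in the ensemble-size direction: `P_{ℓ₂} = P₀ · 2^{ℓ₂}`. -/
noncomputable def resP (P₀ : ℕ) (ℓ₂ : ℕ) : ℝ := (P₀ : ℝ) * 2 ^ ℓ₂

/-- Maximal level `L(ε) = max(⌈log₂ ε⁻¹ + log₂ log₂ ε⁻¹⌉ − L₀, 1)`. -/
noncomputable def levelL (L₀ : ℕ) (ε : ℝ) : ℕ :=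
  (max (⌈Real.logb 2 ε⁻¹ + Real.logb 2 (Real.logb 2 ε⁻¹)⌉ - (L₀ : ℤ)) 1).toNat

/-- Triangular multi-index set `{ℓ ∈ ℕ₀² : ℓ₁ + ℓ₂ ≤ L}` as a finite set. -/
def idxSet (L : ℕ) : Finset (ℕ × ℕ) :=
  (Finset.range (L + 1) ×ˢ Finset.range (L + 1)).filter fun ℓ => ℓ.1 + ℓ.2 ≤ L

/-- Number of samples for the `Lᵖ` variant:
`M_ℓ(ε) = ⌈ε⁻² N_{ℓ₁}^{-4/3} P_{ℓ₂}^{-4/3}⌉`. -/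
noncomputable def numSamplesLp (N₀ P₀ : ℕ) (ε : ℝ) (ℓ : ℕ × ℕ) : ℕ :=
  ⌈ε⁻¹ ^ 2 * resN N₀ ℓ.1 ^ (-(4 : ℝ) / 3) * resP P₀ ℓ.2 ^ (-(4 : ℝ) / 3)⌉₊

open Real Finset

lemma logb_two_le_self {x : ℝ} (hx : 1 ≤ x) : logb 2 x ≤ x := by
  have bernoulli : 1 + x * 1 ≤ (1 + 1 : ℝ) ^ x := one_add_mul_self_le_rpow_one_add (by norm_num) hx
  rw [logb_le_iff_le_rpow one_lt_two (by linarith)]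
  norm_num at bernoulli
  linarith

lemma logb_two_pow_three_le {t : ℝ} (ht : 1 ≤ t) : logb 2 t ^ 3 ≤ 216 * t := by
  have hlog : log t ≤ 3 * t ^ (1 / 3 : ℝ) := by
    simpa [div_eq_mul_inv, mul_comm] using
      log_le_rpow_div (by linarith) (by norm_num : (0 : ℝ) < 1 / 3)
  have hlogb : logb 2 t ≤ 6 * t ^ (1 / 3 : ℝ) := by
    rw [logb, div_le_iff₀ (by positivity)]
    nlinarith [log_two_gt_d9, rpow_nonneg (by linarith : (0 : ℝ) ≤ t) (1 / 3 : ℝ)]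
  calc logb 2 t ^ 3 ≤ (6 * t ^ (1 / 3 : ℝ)) ^ 3 :=
        pow_le_pow_left₀ (logb_nonneg one_lt_two ht) hlogb 3
    _ = 216 * t := by
        rw [mul_pow, ← rpow_mul_natCast (by linarith)]; norm_num

-- At `x = 0` both sides vanish, since `0 ^ y = 0` for `y ≠ 0`.
lemma rpow_neg_four_thirds_mul_self {x : ℝ} (hx : 0 ≤ x) :
    x ^ (-(4 : ℝ) / 3) * x = x ^ (-(1 / 3 : ℝ)) := by
  rcases hx.eq_or_lt with rfl | hx
  · simp [zero_rpow]
  · rw [← rpow_add_one hx.ne']; norm_num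

lemma levelL_le (L₀ : ℕ) {ε : ℝ} (h : 0 ≤ logb 2 ε⁻¹ + logb 2 (logb 2 ε⁻¹)) :
    (levelL L₀ ε : ℝ) ≤ logb 2 ε⁻¹ + logb 2 (logb 2 ε⁻¹) + 1 := by
  have hint : (levelL L₀ ε : ℤ) ≤ max ⌈logb 2 ε⁻¹ + logb 2 (logb 2 ε⁻¹)⌉ 1 := by
    unfold levelL
    omega
  have hreal : (levelL L₀ ε : ℝ) ≤ max (⌈logb 2 ε⁻¹ + logb 2 (logb 2 ε⁻¹)⌉ : ℝ) 1 := by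
    exact_mod_cast hint
  exact hreal.trans (max_le (Int.ceil_lt_add_one _).le (by linarith))

lemma levelL_add_one_sq_mul_two_pow_le (L₀ : ℕ) {ε : ℝ} (hε : 0 < ε) (hε' : ε ≤ 1 / 4) :
    ((levelL L₀ ε : ℝ) + 1) ^ 2 * 2 ^ levelL L₀ ε ≤ 3888 * ε⁻¹ ^ 2 := by
  set t := ε⁻¹
  have ht : 4 ≤ t := by simpa using inv_anti₀ hε hε'
  set a := logb 2 t
  have ha : 2 ≤ a := by
    rw [le_logb_iff_rpow_le one_lt_two (by linarith)]; norm_num; linarith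
  have hb : 1 ≤ logb 2 a := by
    rw [le_logb_iff_rpow_le one_lt_two (by linarith)]; norm_num; linarith
  have hba : logb 2 a ≤ a := logb_two_le_self (by linarith)
  have hL := levelL_le L₀ (ε := ε) (by linarith)
  have h2L : (2 : ℝ) ^ levelL L₀ ε ≤ 2 * t * a :=
    calc (2 : ℝ) ^ levelL L₀ ε = 2 ^ (levelL L₀ ε : ℝ) := (rpow_natCast 2 _).symm
      _ ≤ 2 ^ (a + logb 2 a + 1) := rpow_le_rpow_of_exponent_le one_le_two hL
      _ = 2 * t * a := by
        rw [rpow_add two_pos, rpow_add two_pos, rpow_logb two_pos (by norm_num) (by linarith),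
          rpow_logb two_pos (by norm_num) (by linarith), rpow_one]
        ring
  calc ((levelL L₀ ε : ℝ) + 1) ^ 2 * 2 ^ levelL L₀ ε ≤ (3 * a) ^ 2 * (2 * t * a) := by
        gcongr; linarith
    _ = 18 * a ^ 3 * t := by ring
    _ ≤ 18 * (216 * t) * t := by gcongr; exact logb_two_pow_three_le (by linarith)
    _ = 3888 * t ^ 2 := by ring

lemma sum_idxSet_le_sum_mul_sum {f g : ℕ → ℝ} (hf : ∀ i, 0 ≤ f i) (hg : ∀ j, 0 ≤ g j) (L : ℕ) :
    ∑ ℓ ∈ idxSet L, f ℓ.1 * g ℓ.2 ≤ (∑ i ∈ range (L + 1), f i) * ∑ j ∈ range (L + 1), g j := by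
  rw [sum_mul_sum, ← sum_product']
  exact sum_le_sum_of_subset_of_nonneg (filter_subset _ _) fun ℓ _ _ => mul_nonneg (hf _) (hg _)

lemma sum_range_rpow_neg_mul_two_pow_le {x s : ℝ} (hx : 0 ≤ x) (hs : 0 < s) (n : ℕ) :
    ∑ i ∈ range n, (x * 2 ^ i) ^ (-s) ≤ x ^ (-s) * (1 - 2 ^ (-s))⁻¹ := by
  have hterm (i : ℕ) : (x * 2 ^ i) ^ (-s) = x ^ (-s) * ((2 : ℝ) ^ (-s)) ^ i := by
    rw [mul_rpow hx (by positivity), ← rpow_natCast_mul zero_le_two, mul_comm (i : ℝ),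
      rpow_mul_natCast zero_le_two, mul_comm]
  simp_rw [hterm, ← mul_sum]
  gcongr
  simpa using geom_sum_Ico_le_of_lt_one (m := 0) (n := n) (by positivity : (0 : ℝ) ≤ 2 ^ (-s))
    (rpow_lt_one_of_one_lt_of_neg one_lt_two (by linarith))

lemma sum_idxSet_resN_mul_resP_le (N₀ P₀ L : ℕ) :
    ∑ ℓ ∈ idxSet L, resN N₀ ℓ.1 * resP P₀ ℓ.2 ≤ ((L : ℝ) + 1) ^ 2 * 2 ^ L * (N₀ * P₀) := by
  have hterm : ∀ ℓ ∈ idxSet L, resN N₀ ℓ.1 * resP P₀ ℓ.2 ≤ N₀ * P₀ * 2 ^ L := by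
    intro ℓ hℓ
    have hpow : (2 : ℝ) ^ (ℓ.1 + ℓ.2) ≤ 2 ^ L := pow_le_pow_right₀ one_le_two (mem_filter.mp hℓ).2
    calc resN N₀ ℓ.1 * resP P₀ ℓ.2 = N₀ * P₀ * 2 ^ (ℓ.1 + ℓ.2) := by rw [resN, resP, pow_add]; ring
      _ ≤ N₀ * P₀ * 2 ^ L := by gcongr
  have hcard : (#(idxSet L) : ℝ) ≤ ((L : ℝ) + 1) ^ 2 := by
    have : #(idxSet L) ≤ (L + 1) ^ 2 := by
      simpa [idxSet, sq] using card_filter_le (range (L + 1) ×ˢ range (L + 1)) _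
    exact_mod_cast this
  calc ∑ ℓ ∈ idxSet L, resN N₀ ℓ.1 * resP P₀ ℓ.2 ≤ #(idxSet L) • ((N₀ : ℝ) * P₀ * 2 ^ L) :=
        sum_le_card_nsmul _ _ _ hterm
    _ ≤ ((L : ℝ) + 1) ^ 2 * (N₀ * P₀ * 2 ^ L) := by rw [nsmul_eq_mul]; gcongr
    _ = ((L : ℝ) + 1) ^ 2 * 2 ^ L * (N₀ * P₀) := by ring

section Cost

variable (N₀ P₀ : ℕ) (ε : ℝ)

lemma numSamplesLp_mul_bounds (ℓ : ℕ × ℕ) :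
    ε⁻¹ ^ 2 * (resN N₀ ℓ.1 ^ (-(1 / 3 : ℝ)) * resP P₀ ℓ.2 ^ (-(1 / 3 : ℝ))) ≤
        numSamplesLp N₀ P₀ ε ℓ * (resN N₀ ℓ.1 * resP P₀ ℓ.2) ∧
      numSamplesLp N₀ P₀ ε ℓ * (resN N₀ ℓ.1 * resP P₀ ℓ.2) ≤
        ε⁻¹ ^ 2 * (resN N₀ ℓ.1 ^ (-(1 / 3 : ℝ)) * resP P₀ ℓ.2 ^ (-(1 / 3 : ℝ))) +
          resN N₀ ℓ.1 * resP P₀ ℓ.2 := by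
  have hN : 0 ≤ resN N₀ ℓ.1 := by unfold resN; positivity
  have hP : 0 ≤ resP P₀ ℓ.2 := by unfold resP; positivity
  set x := ε⁻¹ ^ 2 * resN N₀ ℓ.1 ^ (-(4 : ℝ) / 3) * resP P₀ ℓ.2 ^ (-(4 : ℝ) / 3)
  have hx : 0 ≤ x := by positivity
  have hxw : x * (resN N₀ ℓ.1 * resP P₀ ℓ.2) =
      ε⁻¹ ^ 2 * (resN N₀ ℓ.1 ^ (-(1 / 3 : ℝ)) * resP P₀ ℓ.2 ^ (-(1 / 3 : ℝ))) := by
    rw [← rpow_neg_four_thirds_mul_self hN, ← rpow_neg_four_thirds_mul_self hP]; ring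
  rw [← hxw]
  refine ⟨by gcongr; exact Nat.le_ceil x, ?_⟩
  calc (⌈x⌉₊ : ℝ) * (resN N₀ ℓ.1 * resP P₀ ℓ.2) ≤ (x + 1) * (resN N₀ ℓ.1 * resP P₀ ℓ.2) := by
        gcongr; exact (Nat.ceil_lt_add_one hx).le
    _ = x * (resN N₀ ℓ.1 * resP P₀ ℓ.2) + resN N₀ ℓ.1 * resP P₀ ℓ.2 := by ring

lemma le_sum_idxSet_numSamplesLp_mul (L : ℕ) :
    ε⁻¹ ^ 2 * ((N₀ : ℝ) ^ (-(1 / 3 : ℝ)) * (P₀ : ℝ) ^ (-(1 / 3 : ℝ))) ≤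
      ∑ ℓ ∈ idxSet L, numSamplesLp N₀ P₀ ε ℓ * (resN N₀ ℓ.1 * resP P₀ ℓ.2) := by
  have hmem : ((0, 0) : ℕ × ℕ) ∈ idxSet L := by simp [idxSet]
  have hnonneg (ℓ : ℕ × ℕ) : 0 ≤ (numSamplesLp N₀ P₀ ε ℓ : ℝ) * (resN N₀ ℓ.1 * resP P₀ ℓ.2) := by
    unfold resN resP; positivity
  simpa [resN, resP] using
    (numSamplesLp_mul_bounds N₀ P₀ ε (0, 0)).1.trans (single_le_sum (fun ℓ _ => hnonneg ℓ) hmem)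

lemma sum_idxSet_numSamplesLp_mul_le (L : ℕ) :
    ∑ ℓ ∈ idxSet L, numSamplesLp N₀ P₀ ε ℓ * (resN N₀ ℓ.1 * resP P₀ ℓ.2) ≤
      ε⁻¹ ^ 2 * ((N₀ : ℝ) ^ (-(1 / 3 : ℝ)) * (P₀ : ℝ) ^ (-(1 / 3 : ℝ)) *
          (1 - 2 ^ (-(1 / 3 : ℝ)))⁻¹ ^ 2) + ((L : ℝ) + 1) ^ 2 * 2 ^ L * (N₀ * P₀) := by
  have hgeom :
      ∑ ℓ ∈ idxSet L, resN N₀ ℓ.1 ^ (-(1 / 3 : ℝ)) * resP P₀ ℓ.2 ^ (-(1 / 3 : ℝ)) ≤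
        (N₀ : ℝ) ^ (-(1 / 3 : ℝ)) * (P₀ : ℝ) ^ (-(1 / 3 : ℝ)) * (1 - 2 ^ (-(1 / 3 : ℝ)))⁻¹ ^ 2 := by
    refine (sum_idxSet_le_sum_mul_sum (f := fun i => resN N₀ i ^ (-(1 / 3 : ℝ)))
      (g := fun j => resP P₀ j ^ (-(1 / 3 : ℝ))) (fun i => by unfold resN; positivity)
      (fun j => by unfold resP; positivity) L).trans ?_
    calc (∑ i ∈ range (L + 1), resN N₀ i ^ (-(1 / 3 : ℝ))) *
          ∑ j ∈ range (L + 1), resP P₀ j ^ (-(1 / 3 : ℝ)) ≤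
          ((N₀ : ℝ) ^ (-(1 / 3 : ℝ)) * (1 - 2 ^ (-(1 / 3 : ℝ)))⁻¹) *
            ((P₀ : ℝ) ^ (-(1 / 3 : ℝ)) * (1 - 2 ^ (-(1 / 3 : ℝ)))⁻¹) := by
          gcongr
          · exact sum_nonneg fun j _ => by unfold resP; positivity
          · have : (2 : ℝ) ^ (-(1 / 3 : ℝ)) < 1 :=
              rpow_lt_one_of_one_lt_of_neg one_lt_two (by norm_num)
            exact mul_nonneg (by positivity) (inv_nonneg.2 (by linarith))
          · exact sum_range_rpow_neg_mul_two_pow_le (Nat.cast_nonneg _) (by norm_num) _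
          · exact sum_range_rpow_neg_mul_two_pow_le (Nat.cast_nonneg _) (by norm_num) _
      _ = _ := by ring
  calc ∑ ℓ ∈ idxSet L, numSamplesLp N₀ P₀ ε ℓ * (resN N₀ ℓ.1 * resP P₀ ℓ.2)
      ≤ ∑ ℓ ∈ idxSet L, (ε⁻¹ ^ 2 * (resN N₀ ℓ.1 ^ (-(1 / 3 : ℝ)) * resP P₀ ℓ.2 ^ (-(1 / 3 : ℝ))) +
          resN N₀ ℓ.1 * resP P₀ ℓ.2) :=
        sum_le_sum fun ℓ _ => (numSamplesLp_mul_bounds N₀ P₀ ε ℓ).2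
    _ ≤ _ := by
        rw [sum_add_distrib, ← mul_sum]
        gcongr
        exact sum_idxSet_resN_mul_resP_le N₀ P₀ L

end Cost

/-- Cost bound for the `Lᵖ` variant of the MIEnKF estimator:
`Σ_{ℓ₁+ℓ₂ ≤ L(ε)} M_ℓ(ε) N_{ℓ₁} P_{ℓ₂} ≂ ε⁻²`. -/
theorem mienkf_cost_Lp (N₀ P₀ : ℕ) (hN₀ : 0 < N₀) (hP₀ : 0 < P₀) (L₀ : ℕ) :
    ∃ c C : ℝ, 0 < c ∧ c ≤ C ∧ ∃ ε₀ : ℝ, 0 < ε₀ ∧ ε₀ < 1 ∧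
      ∀ ε : ℝ, 0 < ε → ε ≤ ε₀ →
        c * ε⁻¹ ^ 2 ≤
            ∑ ℓ ∈ idxSet (levelL L₀ ε),
              (numSamplesLp N₀ P₀ ε ℓ : ℝ) * (resN N₀ ℓ.1 * resP P₀ ℓ.2) ∧
        ∑ ℓ ∈ idxSet (levelL L₀ ε),
            (numSamplesLp N₀ P₀ ε ℓ : ℝ) * (resN N₀ ℓ.1 * resP P₀ ℓ.2)
          ≤ C * ε⁻¹ ^ 2 := by
  set c : ℝ := (N₀ : ℝ) ^ (-(1 / 3 : ℝ)) * (P₀ : ℝ) ^ (-(1 / 3 : ℝ))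
  set C : ℝ := c * (1 - 2 ^ (-(1 / 3 : ℝ)))⁻¹ ^ 2 + 3888 * (N₀ * P₀)
  refine ⟨c, max c C, by positivity, le_max_left _ _, 1 / 4, by norm_num, by norm_num,
    fun ε hε hε₀ => ⟨?_, ?_⟩⟩
  · simpa only [mul_comm c] using le_sum_idxSet_numSamplesLp_mul N₀ P₀ ε (levelL L₀ ε)
  · calc _ ≤ _ := sum_idxSet_numSamplesLp_mul_le N₀ P₀ ε (levelL L₀ ε)
      _ ≤ ε⁻¹ ^ 2 * (c * (1 - 2 ^ (-(1 / 3 : ℝ)))⁻¹ ^ 2) + 3888 * ε⁻¹ ^ 2 * (N₀ * P₀) := by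
          gcongr _ + ?_ * _; exact levelL_add_one_sq_mul_two_pow_le L₀ hε hε₀
      _ = C * ε⁻¹ ^ 2 := by ring
      _ ≤ max c C * ε⁻¹ ^ 2 := by gcongr; exact le_max_right _ _
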